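/- arXiv:1711.02024 — 3 statements merged into one kernel-verified Lean document; each statement's English description precedes it below -/
import Mathlib

section
/- For every nonnegative integer n, the supremum over t ∈ [0,1) of t^n / log(e/(1-t)) is comparable (up to absolute multiplicative constants) to 1/log(n+2). -/
/-!
With `u = 1 - t`, the bound `(1 - u)^n ≤ e^{-nu} ≤ 1 / (1 + n u)` together with
`n + 2 ≤ (1 + n u) · e / u` gives `log (n + 2) ≤ (1 + n u) log (e / u)`, so every value
`t^n / log (e / u)` is at most `1 / log (n + 2)`. Conversely at `u = 1 / (2 (n + 1))` Bernoulli's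
inequality gives `t^n ≥ 1/2`, while `log (e / u) = log (2e (n + 1)) ≤ 3 log (n + 2)`.
-/

open Set Real

lemma one_sub_pow_mul_one_add_le_one {u : ℝ} (hu0 : 0 ≤ u) (hu1 : u ≤ 1) (n : ℕ) :
    (1 - u) ^ n * (1 + n * u) ≤ 1 := by
  have hpow : (1 - u) ^ n ≤ exp (-(n * u)) := by
    rw [neg_mul_eq_mul_neg, exp_nat_mul]
    exact pow_le_pow_left₀ (by linarith) (one_sub_le_exp_neg u) n
  calc (1 - u) ^ n * (1 + n * u) ≤ exp (-(n * u)) * exp (n * u) :=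
        mul_le_mul hpow (by linarith [add_one_le_exp (n * u)]) (by positivity) (exp_pos _).le
    _ = 1 := by rw [← exp_add, neg_add_cancel, exp_zero]

lemma log_nat_add_two_pos (n : ℕ) : 0 < log ((n : ℝ) + 2) :=
  log_pos (by linarith [Nat.cast_nonneg (α := ℝ) n])

lemma one_le_log_exp_one_div {u : ℝ} (hu0 : 0 < u) (hu1 : u ≤ 1) : 1 ≤ log (exp 1 / u) := by
  rw [log_div (exp_ne_zero 1) hu0.ne', log_exp]
  linarith [log_nonpos hu0.le hu1]

lemma log_nat_add_two_le_mul_log_exp_one_div {u : ℝ} (hu0 : 0 < u) (hu1 : u ≤ 1) (n : ℕ) :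
    log (n + 2) ≤ (1 + n * u) * log (exp 1 / u) := by
  have hn := Nat.cast_nonneg (α := ℝ) n
  have hle : (n : ℝ) + 2 ≤ (1 + n * u) * (exp 1 / u) := by
    have h : (n : ℝ) + 1 ≤ (1 + n * u) / u := by
      rw [le_div_iff₀ hu0]; nlinarith
    calc (n : ℝ) + 2 ≤ exp 1 * ((n : ℝ) + 1) := by nlinarith [add_one_le_exp 1]
      _ ≤ exp 1 * ((1 + n * u) / u) := by gcongr
      _ = (1 + n * u) * (exp 1 / u) := by ring
  calc log (n + 2) ≤ log (1 + n * u) + log (exp 1 / u) := by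
        rw [← log_mul (by positivity) (by positivity)]
        exact log_le_log (by positivity) hle
    _ ≤ n * u * log (exp 1 / u) + log (exp 1 / u) := by
        gcongr
        calc log (1 + n * u) ≤ n * u := by
              linarith [log_le_sub_one_of_pos (x := 1 + n * u) (by positivity)]
          _ ≤ n * u * log (exp 1 / u) :=
              le_mul_of_one_le_right (by positivity) (one_le_log_exp_one_div hu0 hu1)
    _ = (1 + n * u) * log (exp 1 / u) := by ring

lemma pow_div_log_exp_one_div_one_sub_le (n : ℕ) {t : ℝ} (ht : t ∈ Ico (0 : ℝ) 1) :
    t ^ n / log (exp 1 / (1 - t)) ≤ 1 / log (n + 2) := by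
  obtain ⟨ht0, ht1⟩ := ht
  have hu0 : 0 < 1 - t := by linarith
  have hu1 : 1 - t ≤ 1 := by linarith
  have hmul := one_sub_pow_mul_one_add_le_one hu0.le hu1 n
  have hlog := one_le_log_exp_one_div hu0 hu1
  rw [sub_sub_cancel] at hmul
  rw [div_le_div_iff₀ (by linarith) (log_nat_add_two_pos n)]
  calc t ^ n * log (n + 2) ≤ t ^ n * ((1 + n * (1 - t)) * log (exp 1 / (1 - t))) :=
        mul_le_mul_of_nonneg_left (log_nat_add_two_le_mul_log_exp_one_div hu0 hu1 n)
          (pow_nonneg ht0 n)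
    _ = t ^ n * (1 + n * (1 - t)) * log (exp 1 / (1 - t)) := by ring
    _ ≤ 1 * log (exp 1 / (1 - t)) := by gcongr

lemma log_exp_one_mul_two_mul_le (n : ℕ) :
    log (exp 1 * (2 * (n + 1))) ≤ 3 * log (n + 2) := by
  have hn := Nat.cast_nonneg (α := ℝ) n
  have hsq : 4 * ((n : ℝ) + 1) ≤ (n + 2) ^ 2 := by nlinarith
  calc log (exp 1 * (2 * (n + 1))) ≤ log (((n : ℝ) + 2) ^ 3) :=
        log_le_log (by positivity) (by nlinarith [exp_one_lt_d9])
    _ = 3 * log (n + 2) := by rw [log_pow]; norm_num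

lemma exists_le_pow_div_log_exp_one_div_one_sub (n : ℕ) :
    ∃ t ∈ Ico (0 : ℝ) 1, 1 / 6 / log (n + 2) ≤ t ^ n / log (exp 1 / (1 - t)) := by
  have hn := Nat.cast_nonneg (α := ℝ) n
  set u : ℝ := 1 / (2 * (n + 1)) with hu
  have hu0 : 0 < u := by positivity
  have hnu : n * u ≤ 1 / 2 := by
    rw [hu, mul_one_div, div_le_div_iff₀ (by positivity) two_pos]; linarith
  have hu_half : u ≤ 1 / 2 := by
    rw [hu, div_le_div_iff₀ (by positivity) two_pos]; linarith
  refine ⟨1 - u, ⟨by linarith, by linarith⟩, ?_⟩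
  rw [sub_sub_cancel]
  have hpow : 1 / 2 ≤ (1 - u) ^ n := by
    have := one_add_mul_le_pow (a := -u) (by linarith) n
    rw [← sub_eq_add_neg] at this
    linarith
  have hlog : log (exp 1 / u) ≤ 3 * log (n + 2) := by
    rw [hu, one_div, div_inv_eq_mul]
    exact log_exp_one_mul_two_mul_le n
  calc 1 / 6 / log (n + 2) = (1 / 2) / (3 * log (n + 2)) := by ring
    _ ≤ (1 - u) ^ n / log (exp 1 / u) :=
        div_le_div₀ (by positivity) hpow
          (by linarith [one_le_log_exp_one_div hu0 (by linarith)]) hlog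

theorem monomial_norm_log_weight :
    ∃ c C : ℝ, 0 < c ∧ 0 < C ∧ ∀ n : ℕ,
      c / Real.log ((n : ℝ) + 2) ≤
        sSup {x : ℝ | ∃ t ∈ Ico (0:ℝ) 1, x = t ^ n / Real.log (Real.exp 1 / (1 - t))} ∧
      sSup {x : ℝ | ∃ t ∈ Ico (0:ℝ) 1, x = t ^ n / Real.log (Real.exp 1 / (1 - t))} ≤
        C / Real.log ((n : ℝ) + 2) := by
  refine ⟨1 / 6, 1, by norm_num, one_pos, fun n => ?_⟩
  have hupper : ∀ x ∈ {x : ℝ | ∃ t ∈ Ico (0:ℝ) 1, x = t ^ n / log (exp 1 / (1 - t))},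
      x ≤ 1 / log ((n : ℝ) + 2) := by
    rintro x ⟨t, ht, rfl⟩
    exact pow_div_log_exp_one_div_one_sub_le n ht
  obtain ⟨t, ht, hlower⟩ := exists_le_pow_div_log_exp_one_div_one_sub n
  exact ⟨le_csSup_of_le ⟨_, hupper⟩ ⟨t, ht, rfl⟩ hlower,
    Real.sSup_le hupper (one_div_nonneg.mpr (log_nat_add_two_pos n).le)⟩
end

section
/- Let α < 0 and let g be holomorphic and φ : 𝔻 → 𝔻 holomorphic. If the weighted composition operator f ↦ g·(f∘φ) maps the growth space Λ^β (β<0, with norm sup |f(z)|(1-|z|)^{-β}) boundedly into Λ^α (norm sup |f(z)|(1-|z|)^{-α}), then sup_{z∈𝔻} |g(z)|(1-|z|)^{-α}(1-|φ(z)|)^{β} < ∞. -/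
open Metric ComplexConjugate

/-! Test the operator on the kernel power `f_w(ζ) = (1 - ζ w̄)^β` with `w = φ z`. Since
`|1 - ζ w̄| ≥ 1 - |ζ|` and `β ≤ 0`, `f_w` lies in the unit ball of `Λ^β`, while at the point
`w` itself `|f_w(w)| = (1 - |w|²)^β ≥ 2^β (1 - |w|)^β`. Evaluating the bound on `g · (f_w ∘ φ)`
at `z` therefore gives the claimed estimate with constant `2^(-β) M`. -/

namespace GrowthSpace

noncomputable def kernelPow (β : ℝ) (w ζ : ℂ) : ℂ := (1 - ζ * conj w) ^ (β : ℂ)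

lemma one_sub_mul_conj_mem_slitPlane {ζ w : ℂ} (hζ : ‖ζ‖ < 1) (hw : ‖w‖ ≤ 1) :
    1 - ζ * conj w ∈ Complex.slitPlane := by
  rw [sub_eq_add_neg]
  apply Complex.mem_slitPlane_of_norm_lt_one
  rw [norm_neg, norm_mul, Complex.norm_conj]
  calc ‖ζ‖ * ‖w‖ ≤ ‖ζ‖ * 1 := by gcongr
    _ < 1 := by simpa

lemma differentiableOn_kernelPow (β : ℝ) {w : ℂ} (hw : ‖w‖ ≤ 1) :
    DifferentiableOn ℂ (kernelPow β w) (ball 0 1) := fun _ hζ =>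
  ((differentiableAt_id.mul_const (conj w)).const_sub 1 |>.cpow (differentiableAt_const _)
    (one_sub_mul_conj_mem_slitPlane (mem_ball_zero_iff.mp hζ) hw)).differentiableWithinAt

lemma one_sub_norm_le_norm_one_sub_mul_conj (ζ : ℂ) {w : ℂ} (hw : ‖w‖ ≤ 1) :
    1 - ‖ζ‖ ≤ ‖1 - ζ * conj w‖ :=
  calc 1 - ‖ζ‖ ≤ 1 - ‖ζ * conj w‖ := by
        rw [norm_mul, Complex.norm_conj]
        nlinarith [norm_nonneg ζ]
    _ ≤ ‖1 - ζ * conj w‖ := by simpa using norm_sub_norm_le (1 : ℂ) (ζ * conj w)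

lemma norm_kernelPow_mul_rpow_le_one {β : ℝ} (hβ : β ≤ 0) {w ζ : ℂ} (hw : ‖w‖ ≤ 1)
    (hζ : ‖ζ‖ < 1) : ‖kernelPow β w ζ‖ * (1 - ‖ζ‖) ^ (-β) ≤ 1 := by
  have hpos : 0 < 1 - ‖ζ‖ := by linarith
  calc ‖kernelPow β w ζ‖ * (1 - ‖ζ‖) ^ (-β) ≤ (1 - ‖ζ‖) ^ β * (1 - ‖ζ‖) ^ (-β) := by
        rw [kernelPow, Complex.norm_cpow_real]
        gcongr ?_ * _
        exact Real.rpow_le_rpow_of_nonpos hpos (one_sub_norm_le_norm_one_sub_mul_conj ζ hw) hβ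
    _ = 1 := by rw [← Real.rpow_add hpos, add_neg_cancel, Real.rpow_zero]

lemma norm_kernelPow_self (β : ℝ) {w : ℂ} (hw : ‖w‖ < 1) :
    ‖kernelPow β w w‖ = (1 - ‖w‖ ^ 2) ^ β := by
  have h : 1 - w * conj w = ((1 - ‖w‖ ^ 2 : ℝ) : ℂ) := by
    rw [Complex.mul_conj, Complex.normSq_eq_norm_sq]
    push_cast
    ring
  rw [kernelPow, h, Complex.norm_cpow_real, Complex.norm_real, Real.norm_of_nonneg]
  nlinarith [norm_nonneg w]

lemma rpow_one_sub_le_two_rpow_mul {x β : ℝ} (hx₀ : 0 ≤ x) (hx₁ : x < 1) (hβ : β ≤ 0) :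
    (1 - x) ^ β ≤ 2 ^ (-β) * (1 - x ^ 2) ^ β := by
  have h : (2 * (1 - x)) ^ β ≤ (1 - x ^ 2) ^ β :=
    Real.rpow_le_rpow_of_nonpos (by nlinarith) (by nlinarith) hβ
  calc (1 - x) ^ β = 2 ^ (-β) * (2 * (1 - x)) ^ β := by
        rw [Real.mul_rpow zero_le_two (by linarith), ← mul_assoc, ← Real.rpow_add two_pos,
          neg_add_cancel, Real.rpow_zero, one_mul]
    _ ≤ 2 ^ (-β) * (1 - x ^ 2) ^ β := by gcongr

end GrowthSpace

open GrowthSpace in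
theorem bounded_wco_necessity_general (α β : ℝ) (hβ : β < 0)
    (g φ : ℂ → ℂ)
    (hφm : ∀ z ∈ ball (0:ℂ) 1, φ z ∈ ball (0:ℂ) 1)
    (M : ℝ)
    (hbdd : ∀ f : ℂ → ℂ, DifferentiableOn ℂ f (ball (0:ℂ) 1) →
      (∀ z ∈ ball (0:ℂ) 1, ‖f z‖ * (1 - ‖z‖) ^ (-β) ≤ 1) →
      ∀ z ∈ ball (0:ℂ) 1, ‖g z * f (φ z)‖ * (1 - ‖z‖) ^ (-α) ≤ M) :
    ∃ M' : ℝ, ∀ z ∈ ball (0:ℂ) 1,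
      ‖g z‖ * (1 - ‖z‖) ^ (-α) * (1 - ‖φ z‖) ^ β ≤ M' := by
  refine ⟨2 ^ (-β) * M, fun z hz => ?_⟩
  have hw : ‖φ z‖ < 1 := mem_ball_zero_iff.mp (hφm z hz)
  have htest := hbdd (kernelPow β (φ z)) (differentiableOn_kernelPow β hw.le)
    (fun ζ hζ => norm_kernelPow_mul_rpow_le_one hβ.le hw.le (mem_ball_zero_iff.mp hζ)) z hz
  rw [norm_mul, norm_kernelPow_self β hw, mul_right_comm] at htest
  have hz₁ : 0 ≤ 1 - ‖z‖ := by linarith [mem_ball_zero_iff.mp hz]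
  calc ‖g z‖ * (1 - ‖z‖) ^ (-α) * (1 - ‖φ z‖) ^ β
      ≤ ‖g z‖ * (1 - ‖z‖) ^ (-α) * (2 ^ (-β) * (1 - ‖φ z‖ ^ 2) ^ β) := by
        gcongr
        exact rpow_one_sub_le_two_rpow_mul (norm_nonneg _) hw hβ.le
    _ = 2 ^ (-β) * (‖g z‖ * (1 - ‖z‖) ^ (-α) * (1 - ‖φ z‖ ^ 2) ^ β) := by ring
    _ ≤ 2 ^ (-β) * M := by gcongr

theorem bounded_wco_necessity (α β : ℝ) (hα : α < 0) (hβ : β < 0)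
    (g φ : ℂ → ℂ)
    (hg : DifferentiableOn ℂ g (ball (0:ℂ) 1))
    (hφ : DifferentiableOn ℂ φ (ball (0:ℂ) 1))
    (hφm : ∀ z ∈ ball (0:ℂ) 1, φ z ∈ ball (0:ℂ) 1)
    (M : ℝ)
    (hbdd : ∀ f : ℂ → ℂ, DifferentiableOn ℂ f (ball (0:ℂ) 1) →
      (∀ z ∈ ball (0:ℂ) 1, ‖f z‖ * (1 - ‖z‖) ^ (-β) ≤ 1) →
      ∀ z ∈ ball (0:ℂ) 1, ‖g z * f (φ z)‖ * (1 - ‖z‖) ^ (-α) ≤ M) :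
    ∃ M' : ℝ, ∀ z ∈ ball (0:ℂ) 1,
      ‖g z‖ * (1 - ‖z‖) ^ (-α) * (1 - ‖φ z‖) ^ β ≤ M' :=
  bounded_wco_necessity_general α β hβ g φ hφm M hbdd
end

section
/- Let ω, ν be weights on [0,1), g holomorphic on 𝔻 and φ : 𝔻 → 𝔻 holomorphic. Then limsup_{n→∞} ‖g·φ^n‖_{H^∞_ν} / ‖z^n‖_{H^∞_ω} ≤ limsup_{|φ(z)|→1} |g(z)| ω̃(|φ(z)|)/ν(|z|), where ω̃ is the associated weight of ω, assuming the right-hand side is finite and sup_z |g(z)|/ν(|z|) < ∞. -/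
open Metric Set

/-- The associated weight of `ω`: `ω̃(t) = sup {|f(t)| : f holomorphic on 𝔻, |f| ≤ ω(|·|)}`. -/
noncomputable def assocWeight (ω : ℝ → ℝ) (t : ℝ) : ℝ :=
  sSup {x : ℝ | ∃ f : ℂ → ℂ, DifferentiableOn ℂ f (ball (0:ℂ) 1) ∧
    (∀ z ∈ ball (0:ℂ) 1, ‖f z‖ ≤ ω ‖z‖) ∧ x = ‖f (t : ℂ)‖}

open Filter

/-!
Testing the definition of `ω̃(t)` against the holomorphic function `zⁿ / ‖zⁿ‖_{H^∞_ω}` gives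
`tⁿ ≤ ω̃(t) ‖zⁿ‖_{H^∞_ω}`. Hence at points where `|φ(z)| > δ` the quotient
`|g(z) φ(z)ⁿ| / ν(|z|)` is at most `|g(z)| ω̃(|φ(z)|) / ν(|z|) · ‖zⁿ‖_{H^∞_ω}`, while where
`|φ(z)| ≤ δ` it is at most `‖g‖_{H^∞_ν} δⁿ`, which is eventually negligible compared with
`‖zⁿ‖_{H^∞_ω} ≥ t₀ⁿ / ω(t₀)` for any `t₀ ∈ (δ, 1)`.
-/

/-- `‖zⁿ‖_{H^∞_ω}`, written as a supremum over radii. -/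
noncomputable def monomialNorm (ω : ℝ → ℝ) (n : ℕ) : ℝ :=
  sSup {x : ℝ | ∃ t ∈ Ico (0:ℝ) 1, x = t ^ n / ω t}

section MonomialNorm

variable {ω : ℝ → ℝ}

lemma bddAbove_monomialNorm_set (hωp : ∀ t ∈ Ico (0:ℝ) 1, 0 < ω t)
    (hωm : MonotoneOn ω (Ico (0:ℝ) 1)) (n : ℕ) :
    BddAbove {x : ℝ | ∃ t ∈ Ico (0:ℝ) 1, x = t ^ n / ω t} := by
  have h0 : (0:ℝ) ∈ Ico (0:ℝ) 1 := ⟨le_rfl, one_pos⟩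
  refine ⟨1 / ω 0, ?_⟩
  rintro x ⟨t, ht, rfl⟩
  exact div_le_div₀ zero_le_one (pow_le_one₀ ht.1 ht.2.le) (hωp 0 h0) (hωm h0 ht ht.1)

lemma div_le_monomialNorm (hωp : ∀ t ∈ Ico (0:ℝ) 1, 0 < ω t)
    (hωm : MonotoneOn ω (Ico (0:ℝ) 1)) (n : ℕ) {t : ℝ} (ht : t ∈ Ico (0:ℝ) 1) :
    t ^ n / ω t ≤ monomialNorm ω n :=
  le_csSup (bddAbove_monomialNorm_set hωp hωm n) ⟨t, ht, rfl⟩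

lemma monomialNorm_pos (hωp : ∀ t ∈ Ico (0:ℝ) 1, 0 < ω t)
    (hωm : MonotoneOn ω (Ico (0:ℝ) 1)) (n : ℕ) : 0 < monomialNorm ω n := by
  have h : (1 / 2 : ℝ) ∈ Ico (0:ℝ) 1 := by norm_num
  exact (div_pos (by positivity) (hωp _ h)).trans_le (div_le_monomialNorm hωp hωm n h)

lemma norm_le_assocWeight {f : ℂ → ℂ} (hf : DifferentiableOn ℂ f (ball (0:ℂ) 1))
    (hfω : ∀ z ∈ ball (0:ℂ) 1, ‖f z‖ ≤ ω ‖z‖) {t : ℝ} (ht : t ∈ Ico (0:ℝ) 1) :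
    ‖f t‖ ≤ assocWeight ω t := by
  have htb : (t : ℂ) ∈ ball (0:ℂ) 1 := by
    rw [mem_ball_zero_iff, Complex.norm_real, Real.norm_of_nonneg ht.1]
    exact ht.2
  refine le_csSup ⟨ω t, ?_⟩ ⟨f, hf, hfω, rfl⟩
  rintro x ⟨f', -, hf'ω, rfl⟩
  simpa [Complex.norm_real, Real.norm_of_nonneg ht.1] using hf'ω _ htb

lemma pow_le_assocWeight_mul_monomialNorm (hωp : ∀ t ∈ Ico (0:ℝ) 1, 0 < ω t)
    (hωm : MonotoneOn ω (Ico (0:ℝ) 1)) (n : ℕ) {t : ℝ} (ht : t ∈ Ico (0:ℝ) 1) :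
    t ^ n ≤ assocWeight ω t * monomialNorm ω n := by
  set N := monomialNorm ω n
  have hN : 0 < N := monomialNorm_pos hωp hωm n
  have hbound : ∀ z ∈ ball (0:ℂ) 1, ‖z ^ n / (N : ℂ)‖ ≤ ω ‖z‖ := by
    intro z hz
    have hz1 : ‖z‖ ∈ Ico (0:ℝ) 1 := ⟨norm_nonneg z, mem_ball_zero_iff.mp hz⟩
    rw [norm_div, norm_pow, Complex.norm_real, Real.norm_of_nonneg hN.le, div_le_iff₀ hN,
      mul_comm, ← div_le_iff₀ (hωp _ hz1)]
    exact div_le_monomialNorm hωp hωm n hz1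
  have h := norm_le_assocWeight ((differentiableOn_pow n).div_const (N : ℂ)) hbound ht
  rw [norm_div, norm_pow, Complex.norm_real, Complex.norm_real, Real.norm_of_nonneg ht.1,
    Real.norm_of_nonneg hN.le, div_le_iff₀ hN] at h
  exact h

lemma eventually_mul_pow_le_mul_monomialNorm (hωp : ∀ t ∈ Ico (0:ℝ) 1, 0 < ω t)
    (hωm : MonotoneOn ω (Ico (0:ℝ) 1)) {δ : ℝ} (hδ : δ ∈ Ico (0:ℝ) 1) (M : ℝ) {c : ℝ}
    (hc : 0 < c) : ∀ᶠ n in atTop, M * δ ^ n ≤ c * monomialNorm ω n := by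
  obtain ⟨t₀, hδt₀, ht₀⟩ := exists_between hδ.2
  have ht₀pos : 0 < t₀ := hδ.1.trans_lt hδt₀
  have ht₀mem : t₀ ∈ Ico (0:ℝ) 1 := ⟨ht₀pos.le, ht₀⟩
  have hω₀ : 0 < ω t₀ := hωp t₀ ht₀mem
  have hdecay : Tendsto (fun n : ℕ => M * ω t₀ * (δ / t₀) ^ n) atTop (nhds 0) := by
    simpa using (tendsto_pow_atTop_nhds_zero_of_lt_one (div_nonneg hδ.1 ht₀pos.le)
      ((div_lt_one ht₀pos).mpr hδt₀)).const_mul (M * ω t₀)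
  filter_upwards [hdecay.eventually (eventually_le_nhds hc)] with n hn
  calc M * δ ^ n = M * ω t₀ * (δ / t₀) ^ n * (t₀ ^ n / ω t₀) := by
        rw [div_pow]; field_simp
    _ ≤ c * monomialNorm ω n :=
        mul_le_mul hn (div_le_monomialNorm hωp hωm n ht₀mem) (by positivity) hc.le

end MonomialNorm

theorem essential_limsup_upper_bound_general (ω ν : ℝ → ℝ)
    (hωp : ∀ t ∈ Ico (0:ℝ) 1, 0 < ω t)
    (hωm : MonotoneOn ω (Ico (0:ℝ) 1))
    (hνp : ∀ t ∈ Ico (0:ℝ) 1, 0 < ν t)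
    (g φ : ℂ → ℂ)
    (hφm : ∀ z ∈ ball (0:ℂ) 1, φ z ∈ ball (0:ℂ) 1)
    (hgb : ∃ M : ℝ, ∀ z ∈ ball (0:ℂ) 1, ‖g z‖ / ν ‖z‖ ≤ M)
    (L : ℝ) (hL : 0 ≤ L)
    (hlimsup : ∀ ε > (0:ℝ), ∃ δ ∈ Ico (0:ℝ) 1, ∀ z ∈ ball (0:ℂ) 1,
      δ < ‖φ z‖ → ‖g z‖ * assocWeight ω ‖φ z‖ / ν ‖z‖ ≤ L + ε) :
    ∀ ε > (0:ℝ), ∃ K : ℕ, ∀ n ≥ K, ∀ z ∈ ball (0:ℂ) 1,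
      ‖g z * (φ z) ^ n‖ / ν ‖z‖ ≤
        (L + ε) * sSup {x : ℝ | ∃ t ∈ Ico (0:ℝ) 1, x = t ^ n / ω t} := by
  intro ε hε
  obtain ⟨δ, hδ, hδL⟩ := hlimsup ε hε
  obtain ⟨M, hM⟩ := hgb
  obtain ⟨K, hK⟩ := eventually_atTop.mp
    (eventually_mul_pow_le_mul_monomialNorm hωp hωm hδ M (by positivity : 0 < L + ε))
  refine ⟨K, fun n hn z hz => ?_⟩
  have hνz : 0 < ν ‖z‖ := hνp _ ⟨norm_nonneg z, mem_ball_zero_iff.mp hz⟩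
  have hφz : ‖φ z‖ ∈ Ico (0:ℝ) 1 := ⟨norm_nonneg _, mem_ball_zero_iff.mp (hφm z hz)⟩
  rw [norm_mul, norm_pow, mul_div_right_comm]
  rcases le_or_gt ‖φ z‖ δ with hsmall | hlarge
  · calc ‖g z‖ / ν ‖z‖ * ‖φ z‖ ^ n ≤ ‖g z‖ / ν ‖z‖ * δ ^ n := by gcongr
      _ ≤ M * δ ^ n := mul_le_mul_of_nonneg_right (hM z hz) (pow_nonneg hδ.1 n)
      _ ≤ (L + ε) * monomialNorm ω n := hK n hn
  · have hN := monomialNorm_pos hωp hωm n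
    calc ‖g z‖ / ν ‖z‖ * ‖φ z‖ ^ n
        ≤ ‖g z‖ / ν ‖z‖ * (assocWeight ω ‖φ z‖ * monomialNorm ω n) := by
          gcongr; exact pow_le_assocWeight_mul_monomialNorm hωp hωm n hφz
      _ = ‖g z‖ * assocWeight ω ‖φ z‖ / ν ‖z‖ * monomialNorm ω n := by ring
      _ ≤ (L + ε) * monomialNorm ω n := by gcongr; exact hδL z hz hlarge

theorem essential_limsup_upper_bound (ω ν : ℝ → ℝ)
    (hωc : ContinuousOn ω (Ico (0:ℝ) 1)) (hωp : ∀ t ∈ Ico (0:ℝ) 1, 0 < ω t)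
    (hωm : MonotoneOn ω (Ico (0:ℝ) 1)) (hωu : ¬ BddAbove (ω '' Ico (0:ℝ) 1))
    (hνc : ContinuousOn ν (Ico (0:ℝ) 1)) (hνp : ∀ t ∈ Ico (0:ℝ) 1, 0 < ν t)
    (hνm : MonotoneOn ν (Ico (0:ℝ) 1)) (hνu : ¬ BddAbove (ν '' Ico (0:ℝ) 1))
    (g φ : ℂ → ℂ)
    (hg : DifferentiableOn ℂ g (ball (0:ℂ) 1))
    (hφ : DifferentiableOn ℂ φ (ball (0:ℂ) 1))
    (hφm : ∀ z ∈ ball (0:ℂ) 1, φ z ∈ ball (0:ℂ) 1)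
    (hgb : ∃ M : ℝ, ∀ z ∈ ball (0:ℂ) 1, ‖g z‖ / ν ‖z‖ ≤ M)
    (L : ℝ) (hL : 0 ≤ L)
    (hlimsup : ∀ ε > (0:ℝ), ∃ δ ∈ Ico (0:ℝ) 1, ∀ z ∈ ball (0:ℂ) 1,
      δ < ‖φ z‖ → ‖g z‖ * assocWeight ω ‖φ z‖ / ν ‖z‖ ≤ L + ε) :
    ∀ ε > (0:ℝ), ∃ K : ℕ, ∀ n ≥ K, ∀ z ∈ ball (0:ℂ) 1,
      ‖g z * (φ z) ^ n‖ / ν ‖z‖ ≤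
        (L + ε) * sSup {x : ℝ | ∃ t ∈ Ico (0:ℝ) 1, x = t ^ n / ω t} :=
  essential_limsup_upper_bound_general ω ν hωp hωm hνp g φ hφm hgb L hL hlimsup
end
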